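/- arXiv:1608.00302 — 3 statements merged into one kernel-verified Lean document; each statement's English description precedes it below -/
import Mathlib

section
/- Let G^p = (A, R, p) be a finite probabilistic argument graph with p : A → [0,1], and let E ⊆ A be conflict-free. Let E⁺ = {β ∈ A | ∃α ∈ E, (α, β) ∈ R}, E⁻ = {β ∈ A | ∃α ∈ E, (β, α) ∈ R}, and I = A \ (E ∪ E⁺ ∪ E⁻). Then the probability that E is a preferred extension satisfies p(E^pr) = P_E · P_{I_PR}, where P_E = (Π_{α ∈ E} p(α)) · (Π_{β ∈ E⁻ \ E⁺} (1 − p(β))) and P_{I_PR} = Σ over all B' ⊆ I such that (i) for every α ∈ B' the set {β ∈ A | (β, α) ∈ R} ∩ B' is nonempty and (ii) the empty set is the only admissible set of the induced subgraph G↾B', of (Π_{γ ∈ B'} p(γ)) · (Π_{ξ ∈ I \ B'} (1 − p(ξ))); here p(E^pr) = Σ_{A' ⊆ A, E is a preferred extension of G↾A'} (Π_{α ∈ A'} p(α)) · (Π_{α ∈ A \ A'} (1 − p(α))). -/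
/-!
For `A' ⊆ A`, `E` is a preferred extension of `G↾A'` exactly when `A'` contains `E`, contains no
attacker of `E` that `E` does not attack back, and `A' ∩ I` has no nonempty admissible set: an
admissible `S ⊆ A' ∩ I` enlarges `E` to the admissible set `E ∪ S`, and an admissible `F ⊇ E`
leaves the admissible set `F \ E ⊆ A' ∩ I`. Arguments of `E⁺` are unconstrained. Hence the sum
over `A'` factors along the partition `A = (E ∪ (E⁻ \ E⁺)) ∪ E⁺ ∪ I`, the `E⁺` factor being
`∏ (p + (1 - p)) = 1`.
-/

open scoped Classical

variable {α : Type*} [DecidableEq α]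

/-- `E` is conflict-free w.r.t. attack relation `R`. -/
def ConflictFree (R : α → α → Prop) (E : Finset α) : Prop :=
  ∀ a ∈ E, ∀ b ∈ E, ¬ R a b

/-- `a` is acceptable with respect to `E` under attack relation `R`. -/
def Acceptable (R : α → α → Prop) (E : Finset α) (a : α) : Prop :=
  ∀ b, R b a → ∃ c ∈ E, R c b

/-- The attack relation of the induced subgraph on `A'`: `R ∩ (A' × A')`. -/
def Restrict (A' : Finset α) (R : α → α → Prop) : α → α → Prop :=
  fun a b => a ∈ A' ∧ b ∈ A' ∧ R a b

/-- `E` is an admissible set of the induced subgraph on `A'`. -/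
def AdmissibleIn (A' : Finset α) (R : α → α → Prop) (E : Finset α) : Prop :=
  E ⊆ A' ∧ ConflictFree (Restrict A' R) E ∧
    ∀ a ∈ E, Acceptable (Restrict A' R) E a

/-- `E` is a complete extension of the induced subgraph on `A'`. -/
def CompleteIn (A' : Finset α) (R : α → α → Prop) (E : Finset α) : Prop :=
  AdmissibleIn A' R E ∧ ∀ a ∈ A', Acceptable (Restrict A' R) E a → a ∈ E

/-- `E` is a stable extension of the induced subgraph on `A'`. -/
def StableIn (A' : Finset α) (R : α → α → Prop) (E : Finset α) : Prop :=
  E ⊆ A' ∧ ConflictFree (Restrict A' R) E ∧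
    ∀ a ∈ A', a ∉ E → ∃ c ∈ E, Restrict A' R c a

/-- `E` is a preferred extension (⊆-maximal admissible set) of the induced subgraph on `A'`. -/
def PreferredIn (A' : Finset α) (R : α → α → Prop) (E : Finset α) : Prop :=
  AdmissibleIn A' R E ∧ ∀ F : Finset α, AdmissibleIn A' R F → E ⊆ F → F = E

/-- `E` is the grounded extension (⊆-least complete extension) of the induced subgraph on `A'`. -/
def GroundedIn (A' : Finset α) (R : α → α → Prop) (E : Finset α) : Prop :=
  CompleteIn A' R E ∧ ∀ F : Finset α, CompleteIn A' R F → E ⊆ F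

open Finset

section SubgraphProb

variable (p : α → ℝ)

/-- The probability `p(G↾X)` of the induced subgraph on `X`, inside a graph with arguments `S`. -/
def subgraphProb (S X : Finset α) : ℝ :=
  (∏ a ∈ X, p a) * ∏ a ∈ S \ X, (1 - p a)

theorem subgraphProb_union {S T X Y : Finset α} (hST : Disjoint S T) (hX : X ⊆ S) (hY : Y ⊆ T) :
    subgraphProb p (S ∪ T) (X ∪ Y) = subgraphProb p S X * subgraphProb p T Y := by
  have hsdiff : (S ∪ T) \ (X ∪ Y) = (S \ X) ∪ (T \ Y) := by
    ext x
    have : x ∈ S → x ∉ T := fun h => disjoint_left.1 hST h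
    simp only [mem_sdiff, mem_union]
    grind
  unfold subgraphProb
  rw [prod_union (hST.mono hX hY), hsdiff,
    prod_union (hST.mono sdiff_subset sdiff_subset)]
  ring

theorem sum_subgraphProb_powerset (S : Finset α) : ∑ X ∈ S.powerset, subgraphProb p S X = 1 := by
  simp only [subgraphProb, ← prod_add, add_sub_cancel, prod_const_one]

theorem sum_filter_powerset_union_subgraphProb {S T : Finset α} (hST : Disjoint S T)
    {P : Finset α → Prop} (P₁ P₂ : Finset α → Prop)
    [DecidablePred P] [DecidablePred P₁] [DecidablePred P₂]
    (hP : ∀ X ⊆ S ∪ T, P X ↔ P₁ (X ∩ S) ∧ P₂ (X ∩ T)) :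
    ∑ X ∈ (S ∪ T).powerset.filter P, subgraphProb p (S ∪ T) X =
      (∑ X ∈ S.powerset.filter P₁, subgraphProb p S X) *
        ∑ Y ∈ T.powerset.filter P₂, subgraphProb p T Y := by
  have hsplit : ∀ X ⊆ S ∪ T, X ∩ S ∪ X ∩ T = X := fun X hX => by
    rw [← inter_union_distrib_left, inter_eq_left.2 hX]
  have hunion : ∀ {Y Z}, Y ⊆ S → Z ⊆ T → (Y ∪ Z) ∩ S = Y ∧ (Y ∪ Z) ∩ T = Z := by
    intro Y Z hY hZ
    have : ∀ x, x ∈ S → x ∉ T := fun x h => disjoint_left.1 hST h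
    constructor <;> ext x <;> simp only [mem_inter, mem_union] <;> grind
  rw [sum_mul_sum, ← sum_product']
  refine sum_nbij' (fun X => (X ∩ S, X ∩ T)) (fun YZ => YZ.1 ∪ YZ.2) ?_ ?_ ?_ ?_ ?_
  · intro X hX
    simp only [mem_product, mem_filter, mem_powerset] at hX ⊢
    exact ⟨⟨inter_subset_right, ((hP X hX.1).1 hX.2).1⟩, inter_subset_right, ((hP X hX.1).1 hX.2).2⟩
  · rintro ⟨Y, Z⟩ hYZ
    simp only [mem_product, mem_filter, mem_powerset] at hYZ ⊢
    obtain ⟨⟨hY, hPY⟩, hZ, hPZ⟩ := hYZ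
    refine ⟨union_subset_union hY hZ, ?_⟩
    rw [hP _ (union_subset_union hY hZ), (hunion hY hZ).1, (hunion hY hZ).2]
    exact ⟨hPY, hPZ⟩
  · intro X hX
    exact hsplit X (mem_powerset.1 (mem_filter.1 hX).1)
  · rintro ⟨Y, Z⟩ hYZ
    simp only [mem_product, mem_filter, mem_powerset] at hYZ
    simp only [hunion hYZ.1.1 hYZ.2.1]
  · intro X hX
    conv_lhs => rw [← hsplit X (mem_powerset.1 (mem_filter.1 hX).1)]
    exact subgraphProb_union p hST inter_subset_right inter_subset_right

end SubgraphProb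

section OnlyEmptyAdmissible

omit [DecidableEq α]

variable {r : α → α → Prop} {B : Finset α}

def OnlyEmptyAdmissible (B : Finset α) (r : α → α → Prop) : Prop :=
  ∀ S, AdmissibleIn B r S → S = ∅

theorem admissibleIn_empty (B : Finset α) (r : α → α → Prop) : AdmissibleIn B r ∅ :=
  ⟨empty_subset B, fun _ h => absurd h (notMem_empty _), fun _ h => absurd h (notMem_empty _)⟩

theorem onlyEmptyAdmissible_iff :
    OnlyEmptyAdmissible B r ↔ ∀ S, AdmissibleIn B r S ↔ S = ∅ :=
  ⟨fun h S => ⟨h S, fun hS => hS ▸ admissibleIn_empty B r⟩, fun h S => (h S).1⟩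

/-- An argument of `B` without attackers in `B` would be an admissible singleton. -/
theorem OnlyEmptyAdmissible.exists_attacker (h : OnlyEmptyAdmissible B r) {a : α} (ha : a ∈ B) :
    ∃ b ∈ B, r b a := by
  by_contra! hunattacked
  have hadm : AdmissibleIn B r {a} := by
    refine ⟨singleton_subset_iff.2 ha, ?_, ?_⟩
    · rintro x hx y hy ⟨-, -, hxy⟩
      rw [mem_singleton] at hx hy
      rw [hx, hy] at hxy
      exact hunattacked a ha hxy
    · rintro x hx b ⟨hb, -, hbx⟩
      rw [mem_singleton] at hx
      exact absurd (hx ▸ hbx) (hunattacked b hb)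
  simpa using h {a} hadm

end OnlyEmptyAdmissible

section Attacks

variable (R : Finset (α × α)) (A : Finset α)

-- The sets `E⁺`, `E⁻` and `I` of the informal statement, relative to the argument set `A`.
def attackedBy (E : Finset α) : Finset α :=
  A.filter fun b => ∃ a ∈ E, (a, b) ∈ R

def attackersOf (E : Finset α) : Finset α :=
  A.filter fun b => ∃ a ∈ E, (b, a) ∈ R

def unrelatedTo (E : Finset α) : Finset α :=
  A \ (E ∪ attackedBy R A E ∪ attackersOf R A E)

variable {R A} {E A' : Finset α}

@[simp]
theorem mem_attackedBy {b : α} : b ∈ attackedBy R A E ↔ b ∈ A ∧ ∃ a ∈ E, (a, b) ∈ R :=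
  mem_filter

@[simp]
theorem mem_attackersOf {b : α} : b ∈ attackersOf R A E ↔ b ∈ A ∧ ∃ a ∈ E, (b, a) ∈ R :=
  mem_filter

@[simp]
theorem mem_unrelatedTo {b : α} :
    b ∈ unrelatedTo R A E ↔
      b ∈ A ∧ b ∉ E ∧ b ∉ attackedBy R A E ∧ b ∉ attackersOf R A E := by
  simp only [unrelatedTo, mem_sdiff, mem_union, not_or, and_assoc]

theorem unrelatedTo_subset : unrelatedTo R A E ⊆ A :=
  sdiff_subset

theorem union_sdiff_union_unrelatedTo (hEA : E ⊆ A) :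
    E ∪ (attackersOf R A E \ attackedBy R A E) ∪ (attackedBy R A E ∪ unrelatedTo R A E) = A := by
  ext x
  have : x ∈ E → x ∈ A := fun hx => hEA hx
  simp only [mem_union, mem_sdiff, mem_unrelatedTo, mem_attackedBy, mem_attackersOf]
  grind

theorem ConflictFree.disjoint_attackedBy (hcf : ConflictFree (fun a b => (a, b) ∈ R) E) :
    Disjoint E (attackedBy R A E) :=
  disjoint_left.2 fun x hx hxp =>
    let ⟨_, a, ha, hax⟩ := mem_attackedBy.1 hxp
    hcf a ha x hx hax

theorem ConflictFree.disjoint_attackersOf (hcf : ConflictFree (fun a b => (a, b) ∈ R) E) :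
    Disjoint E (attackersOf R A E) :=
  disjoint_left.2 fun x hx hxm =>
    let ⟨_, a, ha, hxa⟩ := mem_attackersOf.1 hxm
    hcf x hx a ha hxa

theorem disjoint_unrelatedTo :
    Disjoint (E ∪ attackedBy R A E ∪ attackersOf R A E) (unrelatedTo R A E) :=
  disjoint_sdiff

theorem disjoint_sdiff_unrelatedTo (hcf : ConflictFree (fun a b => (a, b) ∈ R) E) :
    Disjoint (E ∪ (attackersOf R A E \ attackedBy R A E))
      (attackedBy R A E ∪ unrelatedTo R A E) := by
  rw [disjoint_union_left, disjoint_union_right, disjoint_union_right]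
  exact ⟨⟨hcf.disjoint_attackedBy,
      disjoint_unrelatedTo.mono_left (subset_union_left.trans subset_union_left)⟩,
    sdiff_disjoint, disjoint_unrelatedTo.mono_left (sdiff_subset.trans subset_union_right)⟩

theorem disjoint_attackedBy_unrelatedTo : Disjoint (attackedBy R A E) (unrelatedTo R A E) :=
  disjoint_unrelatedTo.mono_left (subset_union_right.trans subset_union_left)

theorem admissibleIn_iff_inter_eq (hA' : A' ⊆ A) (hcf : ConflictFree (fun a b => (a, b) ∈ R) E) :
    AdmissibleIn A' (fun a b => (a, b) ∈ R) E ↔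
      A' ∩ (E ∪ (attackersOf R A E \ attackedBy R A E)) = E := by
  constructor
  · rintro ⟨hEA', -, hdef⟩
    refine Subset.antisymm (fun x hx => ?_) (subset_inter hEA' subset_union_left)
    obtain ⟨hxA', hxE | hx⟩ := mem_inter.1 hx |>.imp_right mem_union.1
    · exact hxE
    obtain ⟨⟨hxA, a, ha, hxa⟩, hxn⟩ := mem_sdiff.1 hx |>.imp_left mem_attackersOf.1
    obtain ⟨c, hc, -, -, hcx⟩ := hdef a ha x ⟨hxA', hEA' ha, hxa⟩
    exact absurd (mem_attackedBy.2 ⟨hxA, c, hc, hcx⟩) hxn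
  · intro hinter
    have hEA' : E ⊆ A' := hinter ▸ inter_subset_left
    refine ⟨hEA', fun a ha b hb h => hcf a ha b hb h.2.2, ?_⟩
    rintro a ha b ⟨hbA', -, hba⟩
    by_cases hb : b ∈ attackedBy R A E
    · obtain ⟨-, c, hc, hcb⟩ := mem_attackedBy.1 hb
      exact ⟨c, hc, hEA' hc, hbA', hcb⟩
    · have hbE : b ∈ E := hinter ▸ mem_inter.2 ⟨hbA', mem_union_right _
        (mem_sdiff.2 ⟨mem_attackersOf.2 ⟨hA' hbA', a, ha, hba⟩, hb⟩)⟩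
      exact absurd hba (hcf b hbE a ha)

theorem AdmissibleIn.union_of_admissibleIn_inter_unrelatedTo (hA' : A' ⊆ A)
    {S : Finset α} (hE : AdmissibleIn A' (fun a b => (a, b) ∈ R) E)
    (hS : AdmissibleIn (A' ∩ unrelatedTo R A E) (fun a b => (a, b) ∈ R) S) :
    AdmissibleIn A' (fun a b => (a, b) ∈ R) (E ∪ S) := by
  obtain ⟨hEA', hEcf, hEdef⟩ := hE
  obtain ⟨hSI, hScf, hSdef⟩ := hS
  have hS' : ∀ {x}, x ∈ S → x ∈ A' ∧ x ∈ unrelatedTo R A E := fun hx => mem_inter.1 (hSI hx)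
  have hattackers : ∀ x ∈ A', x ∈ attackersOf R A E → x ∈ attackedBy R A E := by
    intro x hx hxm
    obtain ⟨hxA, a, ha, hxa⟩ := mem_attackersOf.1 hxm
    obtain ⟨c, hc, -, -, hcx⟩ := hEdef a ha x ⟨hx, hEA' ha, hxa⟩
    exact mem_attackedBy.2 ⟨hxA, c, hc, hcx⟩
  refine ⟨union_subset hEA' fun x hx => (hS' hx).1, ?_, ?_⟩
  · rintro a ha b hb ⟨haA', hbA', hab⟩
    rcases mem_union.1 ha with ha | ha <;> rcases mem_union.1 hb with hb | hb
    · exact hEcf a ha b hb ⟨haA', hbA', hab⟩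
    · exact (mem_unrelatedTo.1 (hS' hb).2).2.2.1 (mem_attackedBy.2 ⟨hA' hbA', a, ha, hab⟩)
    · exact (mem_unrelatedTo.1 (hS' ha).2).2.2.2 (mem_attackersOf.2 ⟨hA' haA', b, hb, hab⟩)
    · exact hScf a ha b hb ⟨hSI ha, hSI hb, hab⟩
  rintro a ha b ⟨hbA', haA', hba⟩
  rcases mem_union.1 ha with ha | ha
  · obtain ⟨c, hc, hcb⟩ := hEdef a ha b ⟨hbA', haA', hba⟩
    exact ⟨c, mem_union_left S hc, hcb⟩
  by_cases hbp : b ∈ attackedBy R A E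
  · obtain ⟨-, c, hc, hcb⟩ := mem_attackedBy.1 hbp
    exact ⟨c, mem_union_left S hc, hEA' hc, hbA', hcb⟩
  have haI := mem_unrelatedTo.1 (hS' ha).2
  have hbI : b ∈ unrelatedTo R A E := mem_unrelatedTo.2
    ⟨hA' hbA', fun hbE => haI.2.2.1 (mem_attackedBy.2 ⟨haI.1, b, hbE, hba⟩), hbp,
      fun hbm => hbp (hattackers b hbA' hbm)⟩
  obtain ⟨c, hc, hcB, -, hcb⟩ := hSdef a ha b ⟨mem_inter.2 ⟨hbA', hbI⟩, hSI ha, hba⟩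
  exact ⟨c, mem_union_right E hc, (mem_inter.1 hcB).1, hbA', hcb⟩

theorem AdmissibleIn.sdiff_admissibleIn_inter_unrelatedTo (hA' : A' ⊆ A)
    {F : Finset α} (hF : AdmissibleIn A' (fun a b => (a, b) ∈ R) F) (hEF : E ⊆ F) :
    AdmissibleIn (A' ∩ unrelatedTo R A E) (fun a b => (a, b) ∈ R) (F \ E) := by
  obtain ⟨hFA', hFcf, hFdef⟩ := hF
  have hFI : F \ E ⊆ A' ∩ unrelatedTo R A E := by
    intro x hx
    obtain ⟨hxF, hxE⟩ := mem_sdiff.1 hx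
    have hxA' := hFA' hxF
    refine mem_inter.2 ⟨hxA', mem_unrelatedTo.2 ⟨hA' hxA', hxE, ?_, ?_⟩⟩
    · rintro hxp
      obtain ⟨-, a, ha, hax⟩ := mem_attackedBy.1 hxp
      exact hFcf a (hEF ha) x hxF ⟨hFA' (hEF ha), hxA', hax⟩
    · rintro hxm
      obtain ⟨-, a, ha, hxa⟩ := mem_attackersOf.1 hxm
      exact hFcf x hxF a (hEF ha) ⟨hxA', hFA' (hEF ha), hxa⟩
  refine ⟨hFI, fun a ha b hb h => hFcf a (mem_sdiff.1 ha).1 b (mem_sdiff.1 hb).1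
    ⟨(mem_inter.1 h.1).1, (mem_inter.1 h.2.1).1, h.2.2⟩, ?_⟩
  rintro a ha b ⟨hbB, haB, hba⟩
  obtain ⟨hbA', hbI⟩ := mem_inter.1 hbB
  obtain ⟨c, hcF, -, -, hcb⟩ := hFdef a (mem_sdiff.1 ha).1 b ⟨hbA', (mem_inter.1 haB).1, hba⟩
  have hcE : c ∉ E := fun hcE =>
    (mem_unrelatedTo.1 hbI).2.2.1 (mem_attackedBy.2 ⟨hA' hbA', c, hcE, hcb⟩)
  have hc : c ∈ F \ E := mem_sdiff.2 ⟨hcF, hcE⟩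
  exact ⟨c, hc, hFI hc, hbB, hcb⟩

theorem preferredIn_iff (hA' : A' ⊆ A) :
    PreferredIn A' (fun a b => (a, b) ∈ R) E ↔
      AdmissibleIn A' (fun a b => (a, b) ∈ R) E ∧
        OnlyEmptyAdmissible (A' ∩ unrelatedTo R A E) (fun a b => (a, b) ∈ R) := by
  constructor
  · rintro ⟨hE, hmax⟩
    refine ⟨hE, fun S hS => ?_⟩
    have hSE : E ∪ S = E := hmax _ (hE.union_of_admissibleIn_inter_unrelatedTo hA' hS)
      subset_union_left
    have hSI : S ⊆ unrelatedTo R A E := hS.1.trans inter_subset_right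
    rw [← subset_empty]
    intro x hx
    have hxE : x ∈ E := hSE ▸ mem_union_right E hx
    exact absurd hxE (mem_unrelatedTo.1 (hSI hx)).2.1
  · rintro ⟨hE, honly⟩
    refine ⟨hE, fun F hF hEF => ?_⟩
    have hFE : F \ E = ∅ := honly _ (hF.sdiff_admissibleIn_inter_unrelatedTo hA' hEF)
    exact Subset.antisymm (sdiff_eq_empty_iff_subset.1 hFE) hEF

theorem onlyEmptyAdmissible_iff_of_subset {B : Finset α} (hB : B ⊆ A) :
    OnlyEmptyAdmissible B (fun a b => (a, b) ∈ R) ↔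
      (∀ a ∈ B, ((A.filter fun b => (b, a) ∈ R) ∩ B).Nonempty) ∧
        ∀ S, AdmissibleIn B (fun a b => (a, b) ∈ R) S ↔ S = ∅ := by
  refine ⟨fun h => ⟨fun a ha => ?_, onlyEmptyAdmissible_iff.1 h⟩,
    fun h => onlyEmptyAdmissible_iff.2 h.2⟩
  obtain ⟨b, hb, hba⟩ := h.exists_attacker ha
  exact ⟨b, mem_inter.2 ⟨mem_filter.2 ⟨hB hb, hba⟩, hb⟩⟩

end Attacks

theorem sum_subgraphProb_preferredIn (p : α → ℝ) {R : Finset (α × α)} {A E : Finset α}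
    (hEA : E ⊆ A) (hcf : ConflictFree (fun a b => (a, b) ∈ R) E) :
    ∑ A' ∈ A.powerset.filter (PreferredIn · (fun a b => (a, b) ∈ R) E), subgraphProb p A A' =
      subgraphProb p (E ∪ (attackersOf R A E \ attackedBy R A E)) E *
        ∑ B ∈ (unrelatedTo R A E).powerset.filter (OnlyEmptyAdmissible · (fun a b => (a, b) ∈ R)),
          subgraphProb p (unrelatedTo R A E) B := by
  set r : α → α → Prop := fun a b => (a, b) ∈ R
  set K := E ∪ (attackersOf R A E \ attackedBy R A E)
  set L := attackedBy R A E ∪ unrelatedTo R A E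
  have hpref : ∀ A' ⊆ K ∪ L, PreferredIn A' r E ↔
      A' ∩ K = E ∧ OnlyEmptyAdmissible (A' ∩ L ∩ unrelatedTo R A E) r := fun A' hA' => by
    rw [union_sdiff_union_unrelatedTo hEA] at hA'
    rw [preferredIn_iff hA', admissibleIn_iff_inter_eq hA' hcf, inter_assoc,
      union_inter_cancel_right]
  conv_lhs => rw [← union_sdiff_union_unrelatedTo hEA (R := R)]
  rw [sum_filter_powerset_union_subgraphProb p (disjoint_sdiff_unrelatedTo hcf) (· = E)
      (fun Y => OnlyEmptyAdmissible (Y ∩ unrelatedTo R A E) r) hpref,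
    sum_filter_powerset_union_subgraphProb p disjoint_attackedBy_unrelatedTo (fun _ => True)
      (OnlyEmptyAdmissible · r) fun _ _ => (and_iff_right trivial).symm,
    filter_eq', if_pos (mem_powerset.2 subset_union_left), sum_singleton, filter_true,
    sum_subgraphProb_powerset, one_mul]

theorem stmt11_general (A : Finset α) (R : Finset (α × α))
    (p : α → ℝ)
    (E : Finset α) (hEA : E ⊆ A)
    (hcf : ConflictFree (fun a b => (a, b) ∈ R) E)
    (Eplus Eminus I : Finset α)
    (hEp : Eplus = A.filter (fun b => ∃ a ∈ E, (a, b) ∈ R))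
    (hEm : Eminus = A.filter (fun b => ∃ a ∈ E, (b, a) ∈ R))
    (hI : I = A \ (E ∪ Eplus ∪ Eminus)) :
    ∑ A' ∈ A.powerset.filter
        (fun A' => PreferredIn A' (fun a b => (a, b) ∈ R) E),
        (∏ a ∈ A', p a) * ∏ a ∈ A \ A', (1 - p a)
      = ((∏ a ∈ E, p a) * ∏ b ∈ Eminus \ Eplus, (1 - p b)) *
        ∑ B' ∈ I.powerset.filter
            (fun B' =>
              (∀ a ∈ B', ((A.filter (fun b => (b, a) ∈ R)) ∩ B').Nonempty) ∧
              (∀ S : Finset α, AdmissibleIn B' (fun a b => (a, b) ∈ R) S ↔ S = ∅)),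
            (∏ c ∈ B', p c) * ∏ x ∈ I \ B', (1 - p x) := by
  replace hEp : Eplus = attackedBy R A E := hEp
  replace hEm : Eminus = attackersOf R A E := hEm
  subst hEp hEm
  replace hI : I = unrelatedTo R A E := hI
  subst hI
  rw [filter_congr fun B hB =>
    (onlyEmptyAdmissible_iff_of_subset ((mem_powerset.1 hB).trans unrelatedTo_subset)).symm]
  have hK : subgraphProb p (E ∪ (attackersOf R A E \ attackedBy R A E)) E =
      (∏ a ∈ E, p a) * ∏ b ∈ attackersOf R A E \ attackedBy R A E, (1 - p b) := by
    rw [subgraphProb, union_sdiff_left,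
      sdiff_eq_self_of_disjoint (hcf.disjoint_attackersOf.symm.mono_left sdiff_subset)]
  rw [← hK]
  exact sum_subgraphProb_preferredIn p hEA hcf

theorem stmt11 (A : Finset α) (R : Finset (α × α)) (hRA : R ⊆ A ×ˢ A)
    (p : α → ℝ) (hp : ∀ a ∈ A, 0 ≤ p a ∧ p a ≤ 1)
    (E : Finset α) (hEA : E ⊆ A)
    (hcf : ConflictFree (fun a b => (a, b) ∈ R) E)
    (Eplus Eminus I : Finset α)
    (hEp : Eplus = A.filter (fun b => ∃ a ∈ E, (a, b) ∈ R))
    (hEm : Eminus = A.filter (fun b => ∃ a ∈ E, (b, a) ∈ R))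
    (hI : I = A \ (E ∪ Eplus ∪ Eminus)) :
    ∑ A' ∈ A.powerset.filter
        (fun A' => PreferredIn A' (fun a b => (a, b) ∈ R) E),
        (∏ a ∈ A', p a) * ∏ a ∈ A \ A', (1 - p a)
      = ((∏ a ∈ E, p a) * ∏ b ∈ Eminus \ Eplus, (1 - p b)) *
        ∑ B' ∈ I.powerset.filter
            (fun B' =>
              (∀ a ∈ B', ((A.filter (fun b => (b, a) ∈ R)) ∩ B').Nonempty) ∧
              (∀ S : Finset α, AdmissibleIn B' (fun a b => (a, b) ∈ R) S ↔ S = ∅)),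
            (∏ c ∈ B', p c) * ∏ x ∈ I \ B', (1 - p x) :=
  stmt11_general A R p E hEA hcf Eplus Eminus I hEp hEm hI
end

section
/- Let G = (A, R) be a finite argument graph and let E ⊆ A be conflict-free. Let E⁺ = {β ∈ A | ∃α ∈ E, (α, β) ∈ R}, E⁻ = {β ∈ A | ∃α ∈ E, (β, α) ∈ R}, and I = A \ (E ∪ E⁺ ∪ E⁻). Then for every A' ⊆ A, E is a complete extension of the induced subgraph G↾A' if and only if E ⊆ A', A' ∩ (E⁻ \ E⁺) = ∅, and for every α ∈ A' ∩ I, the set {β ∈ A | (β, α) ∈ R} ∩ (A' ∩ I) is nonempty. -/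
/-!
For conflict-free `E ⊆ A'`, admissibility in `G↾A'` says exactly that every argument of `A'`
attacking `E` is attacked back by `E`, i.e. that `A'` misses `E⁻ \ E⁺`. Granted this, an argument
of `A' \ E` in `E⁺ ∪ E⁻` is attacked by some member of `E`, which `E` cannot attack back, so it is
never acceptable. An argument of `A' ∩ I` fails to be acceptable iff some attacker in `A'` is not
attacked by `E`, and such an attacker lies in `I`: it is outside `E` because its target is outside
`E⁺`, and outside `E⁻` because `A'` misses `E⁻ \ E⁺`. So completeness amounts to every argument
of `A' ∩ I` having an attacker in `A' ∩ I`.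
-/

open scoped Classical

variable {α : Type*} [DecidableEq α]

-- `SetAttacks r E`, `(AttacksSet r · E)`, `Unrelated r E`: the paper's `E⁺`, `E⁻`, `I` without `∩ A`.
def SetAttacks (r : α → α → Prop) (E : Finset α) (b : α) : Prop :=
  ∃ a ∈ E, r a b

def AttacksSet (r : α → α → Prop) (b : α) (E : Finset α) : Prop :=
  ∃ a ∈ E, r b a

def Unrelated (r : α → α → Prop) (E : Finset α) (b : α) : Prop :=
  b ∉ E ∧ ¬ SetAttacks r E b ∧ ¬ AttacksSet r b E

def SelfDefendingIn (A' : Finset α) (r : α → α → Prop) (E : Finset α) : Prop :=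
  ∀ b ∈ A', AttacksSet r b E → SetAttacks r E b

section Characterization

omit [DecidableEq α]

variable {r : α → α → Prop} {A' E : Finset α} {a : α}

theorem acceptable_restrict_iff (hE : E ⊆ A') (ha : a ∈ A') :
    Acceptable (Restrict A' r) E a ↔ ∀ b ∈ A', r b a → SetAttacks r E b := by
  constructor
  · intro h b hb hba
    obtain ⟨c, hc, -, -, hcb⟩ := h b ⟨hb, ha, hba⟩
    exact ⟨c, hc, hcb⟩
  · rintro h b ⟨hb, -, hba⟩
    obtain ⟨c, hc, hcb⟩ := h b hb hba
    exact ⟨c, hc, hE hc, hb, hcb⟩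

theorem admissibleIn_iff (hcf : ConflictFree r E) :
    AdmissibleIn A' r E ↔ E ⊆ A' ∧ SelfDefendingIn A' r E := by
  refine ⟨fun ⟨hE, _, hacc⟩ => ⟨hE, ?_⟩, fun ⟨hE, hdef⟩ => ⟨hE, ?_, ?_⟩⟩
  · rintro b hb ⟨a, ha, hba⟩
    exact (acceptable_restrict_iff hE (hE ha)).1 (hacc a ha) b hb hba
  · exact fun a ha b hb hab => hcf a ha b hb hab.2.2
  · exact fun a ha => (acceptable_restrict_iff hE (hE ha)).2
      fun b hb hba => hdef b hb ⟨a, ha, hba⟩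

theorem not_acceptable_of_setAttacks (hcf : ConflictFree r E) (hE : E ⊆ A') (ha : a ∈ A')
    (hEa : SetAttacks r E a) : ¬ Acceptable (Restrict A' r) E a := by
  obtain ⟨c, hc, hca⟩ := hEa
  intro hacc
  obtain ⟨d, hd, hdc⟩ := (acceptable_restrict_iff hE ha).1 hacc c (hE hc) hca
  exact hcf d hd c hc hdc

theorem not_acceptable_iff_exists_unrelated_attacker (hE : E ⊆ A')
    (hdef : SelfDefendingIn A' r E) (ha : a ∈ A')
    (hua : Unrelated r E a) :
    ¬ Acceptable (Restrict A' r) E a ↔ ∃ b ∈ A', r b a ∧ Unrelated r E b := by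
  rw [acceptable_restrict_iff hE ha]
  push Not
  refine exists_congr fun b => and_congr_right fun hb => and_congr_right fun hba =>
    ⟨fun hnb => ?_, fun hub => hub.2.1⟩
  exact ⟨fun hbE => hua.2.1 ⟨b, hbE, hba⟩, hnb, fun hbE => hnb (hdef b hb hbE)⟩

theorem completeIn_iff (hcf : ConflictFree r E) :
    CompleteIn A' r E ↔ E ⊆ A' ∧ SelfDefendingIn A' r E ∧
      ∀ a ∈ A', Unrelated r E a → ∃ b ∈ A', r b a ∧ Unrelated r E b := by
  rw [CompleteIn, admissibleIn_iff hcf, and_assoc]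
  refine and_congr_right fun hE => and_congr_right fun hdef => ⟨fun hcomp a ha hua => ?_, ?_⟩
  · rw [← not_acceptable_iff_exists_unrelated_attacker hE hdef ha hua]
    exact fun hacc => hua.1 (hcomp a ha hacc)
  · intro hatt a ha hacc
    by_contra haE
    by_cases hEa : SetAttacks r E a
    · exact not_acceptable_of_setAttacks hcf hE ha hEa hacc
    by_cases haE' : AttacksSet r a E
    · exact not_acceptable_of_setAttacks hcf hE ha (hdef a ha haE') hacc
    have hua : Unrelated r E a := ⟨haE, hEa, haE'⟩
    exact (not_acceptable_iff_exists_unrelated_attacker hE hdef ha hua).2 (hatt a ha hua) hacc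

end Characterization

theorem stmt13_general (A : Finset α) (R : Finset (α × α))
    (E : Finset α)
    (hcf : ConflictFree (fun a b => (a, b) ∈ R) E)
    (Eplus Eminus I : Finset α)
    (hEp : Eplus = A.filter (fun b => ∃ a ∈ E, (a, b) ∈ R))
    (hEm : Eminus = A.filter (fun b => ∃ a ∈ E, (b, a) ∈ R))
    (hI : I = A \ (E ∪ Eplus ∪ Eminus))
    (A' : Finset α) (hA' : A' ⊆ A) :
    CompleteIn A' (fun a b => (a, b) ∈ R) E ↔
      (E ⊆ A' ∧ A' ∩ (Eminus \ Eplus) = ∅ ∧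
        ∀ a ∈ A' ∩ I, ((A.filter (fun b => (b, a) ∈ R)) ∩ (A' ∩ I)).Nonempty) := by
  have mem_I : ∀ b ∈ A', b ∈ I ↔ Unrelated (fun a b => (a, b) ∈ R) E b := by
    intro b hb
    simp only [hI, hEp, hEm, Finset.mem_sdiff, Finset.mem_union, Finset.mem_filter, Unrelated,
      SetAttacks, AttacksSet, hA' hb, true_and, not_or, and_assoc]
  have selfDefending_iff :
      SelfDefendingIn A' (fun a b => (a, b) ∈ R) E ↔ A' ∩ (Eminus \ Eplus) = ∅ := by
    simp only [hEp, hEm, Finset.eq_empty_iff_forall_notMem, Finset.mem_inter, Finset.mem_sdiff,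
      Finset.mem_filter, SelfDefendingIn, AttacksSet, SetAttacks]
    refine forall_congr' fun b =>
      ⟨fun h ⟨hb, ⟨_, hbE⟩, hn⟩ => hn ⟨hA' hb, h hb hbE⟩, fun h hb hbE => ?_⟩
    by_contra hn
    exact h ⟨hb, ⟨hA' hb, hbE⟩, fun ⟨_, hEb⟩ => hn hEb⟩
  rw [completeIn_iff hcf, selfDefending_iff]
  refine and_congr_right fun _ => and_congr_right fun _ => forall_congr' fun a => ?_
  simp only [Finset.mem_inter, and_imp]
  refine forall_congr' fun ha => ?_
  rw [mem_I a ha]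
  refine imp_congr_right fun _ => ?_
  simp only [Finset.Nonempty, Finset.mem_inter, Finset.mem_filter]
  exact exists_congr fun b =>
    ⟨fun ⟨hb, hba, hub⟩ => ⟨⟨hA' hb, hba⟩, hb, (mem_I b hb).2 hub⟩,
      fun ⟨⟨_, hba⟩, hb, hbI⟩ => ⟨hb, hba, (mem_I b hb).1 hbI⟩⟩

theorem stmt13 (A : Finset α) (R : Finset (α × α)) (hRA : R ⊆ A ×ˢ A)
    (E : Finset α) (hEA : E ⊆ A)
    (hcf : ConflictFree (fun a b => (a, b) ∈ R) E)
    (Eplus Eminus I : Finset α)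
    (hEp : Eplus = A.filter (fun b => ∃ a ∈ E, (a, b) ∈ R))
    (hEm : Eminus = A.filter (fun b => ∃ a ∈ E, (b, a) ∈ R))
    (hI : I = A \ (E ∪ Eplus ∪ Eminus))
    (A' : Finset α) (hA' : A' ⊆ A) :
    CompleteIn A' (fun a b => (a, b) ∈ R) E ↔
      (E ⊆ A' ∧ A' ∩ (Eminus \ Eplus) = ∅ ∧
        ∀ a ∈ A' ∩ I, ((A.filter (fun b => (b, a) ∈ R)) ∩ (A' ∩ I)).Nonempty) :=
  stmt13_general A R E hcf Eplus Eminus I hEp hEm hI A' hA'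
end

section
/- Let G = (A, R) be a finite argument graph and let E ⊆ A be conflict-free. Let E⁺ = {β ∈ A | ∃α ∈ E, (α, β) ∈ R}, E⁻ = {β ∈ A | ∃α ∈ E, (β, α) ∈ R}, and I = A \ (E ∪ E⁺ ∪ E⁻). Then for every A' ⊆ A, E is a preferred extension of the induced subgraph G↾A' if and only if the following all hold: E ⊆ A'; A' ∩ (E⁻ \ E⁺) = ∅; for every α ∈ A' ∩ I, the set {β ∈ A | (β, α) ∈ R} ∩ (A' ∩ I) is nonempty; and the empty set is the only admissible set of the induced subgraph G↾(A' ∩ I). -/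
open scoped Classical

variable {α : Type*} [DecidableEq α]

/-!
`E` is admissible in `G↾A'` exactly when every argument of `A'` attacking `E` is attacked by `E`,
which is the condition `A' ∩ (E⁻ \ E⁺) = ∅`. Given that, the admissible supersets `F` of `E` in
`G↾A'` correspond to the admissible sets of the subgraph on `A' ∩ I`, the arguments of `A'`
untouched by `E`, via `F ↦ F \ E` and `S ↦ E ∪ S`; so `E` is maximal iff `∅` is the only
admissible set there. An unattacked argument of `A' ∩ I` would be an admissible singleton, hence
the third condition follows from the fourth.
-/

section

variable {R : α → α → Prop} {A' B E F S : Finset α} {a : α}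

/-- For `A' ⊆ A` this is the set `A' ∩ I` of the statement. -/
noncomputable def untouched (R : α → α → Prop) (E A' : Finset α) : Finset α :=
  A'.filter fun x => x ∉ E ∧ (¬∃ a ∈ E, R a x) ∧ ¬∃ a ∈ E, R x a

theorem mem_untouched {x : α} :
    x ∈ untouched R E A' ↔ x ∈ A' ∧ x ∉ E ∧ (¬∃ a ∈ E, R a x) ∧ ¬∃ a ∈ E, R x a :=
  Finset.mem_filter

theorem untouched_subset : untouched R E A' ⊆ A' :=
  Finset.filter_subset _ _

omit [DecidableEq α] in
theorem Acceptable.mono (hEF : E ⊆ F) (h : Acceptable R E a) : Acceptable R F a :=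
  fun b hba => (h b hba).imp fun _ ⟨hc, hcb⟩ => ⟨hEF hc, hcb⟩

omit [DecidableEq α] in
theorem admissibleIn_empty_s14 : AdmissibleIn B R ∅ :=
  ⟨Finset.empty_subset _, by simp [ConflictFree], by simp⟩

omit [DecidableEq α] in
theorem admissibleIn_singleton (ha : a ∈ B) (hna : ∀ b ∈ B, ¬R b a) : AdmissibleIn B R {a} := by
  refine ⟨Finset.singleton_subset_iff.2 ha, ?_, ?_⟩
  · rintro x hx y hy ⟨-, -, hxy⟩
    rw [Finset.mem_singleton.1 hx, Finset.mem_singleton.1 hy] at hxy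
    exact hna a ha hxy
  · rintro x hx b ⟨hb, -, hbx⟩
    rw [Finset.mem_singleton.1 hx] at hbx
    exact absurd hbx (hna b hb)

omit [DecidableEq α] in
theorem exists_attacker_of_admissibleIn_eq_empty (h : ∀ S, AdmissibleIn B R S → S = ∅)
    (ha : a ∈ B) : ∃ b ∈ B, R b a := by
  by_contra! hna
  exact Finset.singleton_ne_empty a (h _ (admissibleIn_singleton ha hna))

omit [DecidableEq α] in
theorem admissibleIn_iff_of_conflictFree (hcf : ConflictFree R E) :
    AdmissibleIn A' R E ↔ E ⊆ A' ∧ ∀ b ∈ A', (∃ a ∈ E, R b a) → ∃ c ∈ E, R c b := by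
  constructor
  · rintro ⟨hsub, -, hacc⟩
    refine ⟨hsub, fun b hb ⟨a, ha, hba⟩ => ?_⟩
    obtain ⟨c, hc, -, -, hcb⟩ := hacc a ha b ⟨hb, hsub ha, hba⟩
    exact ⟨c, hc, hcb⟩
  · rintro ⟨hsub, hdef⟩
    refine ⟨hsub, fun a ha b hb hab => hcf a ha b hb hab.2.2, ?_⟩
    rintro a ha b ⟨hb, -, hba⟩
    obtain ⟨c, hc, hcb⟩ := hdef b hb ⟨a, ha, hba⟩
    exact ⟨c, hc, hsub hc, hb, hcb⟩

theorem AdmissibleIn.union_untouched (hcf : ConflictFree R E) (hE : AdmissibleIn A' R E)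
    (hS : AdmissibleIn (untouched R E A') R S) : AdmissibleIn A' R (E ∪ S) := by
  obtain ⟨hEsub, -, hEacc⟩ := hE
  obtain ⟨hSsub, hScf, hSacc⟩ := hS
  have hSu {x : α} (hx : x ∈ S) :
      x ∈ A' ∧ x ∉ E ∧ (¬∃ a ∈ E, R a x) ∧ ¬∃ a ∈ E, R x a :=
    mem_untouched.1 (hSsub hx)
  refine ⟨Finset.union_subset hEsub (hSsub.trans untouched_subset), ?_, ?_⟩
  · rintro a ha b hb ⟨-, -, hab⟩
    rcases Finset.mem_union.1 ha with ha | ha <;> rcases Finset.mem_union.1 hb with hb | hb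
    · exact hcf a ha b hb hab
    · exact (hSu hb).2.2.1 ⟨a, ha, hab⟩
    · exact (hSu ha).2.2.2 ⟨b, hb, hab⟩
    · exact hScf a ha b hb ⟨hSsub ha, hSsub hb, hab⟩
  · rintro a ha b ⟨hb, -, hba⟩
    rcases Finset.mem_union.1 ha with ha | ha
    · exact (hEacc a ha).mono Finset.subset_union_left b ⟨hb, hEsub ha, hba⟩
    by_cases hbu : b ∈ untouched R E A'
    · obtain ⟨c, hc, hcu, -, hcb⟩ := hSacc a ha b ⟨hbu, hSsub ha, hba⟩
      exact ⟨c, Finset.mem_union_right _ hc, untouched_subset hcu, hb, hcb⟩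
    have hbE : b ∉ E := fun hbE => (hSu ha).2.2.1 ⟨b, hbE, hba⟩
    obtain ⟨c, hc, hcb⟩ | ⟨e, he, hbe⟩ : (∃ c ∈ E, R c b) ∨ ∃ e ∈ E, R b e := by
      by_contra h
      rw [not_or] at h
      exact hbu (mem_untouched.2 ⟨hb, hbE, h⟩)
    · exact ⟨c, Finset.mem_union_left _ hc, hEsub hc, hb, hcb⟩
    · exact (hEacc e he).mono Finset.subset_union_left b ⟨hb, hEsub he, hbe⟩

theorem AdmissibleIn.sdiff_untouched (hF : AdmissibleIn A' R F) (hEF : E ⊆ F) :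
    AdmissibleIn (untouched R E A') R (F \ E) := by
  obtain ⟨hFsub, hFcf, hFacc⟩ := hF
  have hsub : F \ E ⊆ untouched R E A' := by
    intro x hx
    obtain ⟨hxF, hxE⟩ := Finset.mem_sdiff.1 hx
    refine mem_untouched.2 ⟨hFsub hxF, hxE, ?_, ?_⟩
    · rintro ⟨a, ha, hax⟩
      exact hFcf a (hEF ha) x hxF ⟨hFsub (hEF ha), hFsub hxF, hax⟩
    · rintro ⟨a, ha, hxa⟩
      exact hFcf x hxF a (hEF ha) ⟨hFsub hxF, hFsub (hEF ha), hxa⟩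
  refine ⟨hsub, ?_, ?_⟩
  · rintro a ha b hb ⟨-, -, hab⟩
    exact hFcf a (Finset.sdiff_subset ha) b (Finset.sdiff_subset hb)
      ⟨hFsub (Finset.sdiff_subset ha), hFsub (Finset.sdiff_subset hb), hab⟩
  · rintro a ha b ⟨hbu, -, hba⟩
    obtain ⟨c, hc, -, -, hcb⟩ :=
      hFacc a (Finset.sdiff_subset ha) b ⟨untouched_subset hbu, hFsub (Finset.sdiff_subset ha), hba⟩
    have hcE : c ∉ E := fun hcE => (mem_untouched.1 hbu).2.2.1 ⟨c, hcE, hcb⟩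
    have hc' : c ∈ F \ E := Finset.mem_sdiff.2 ⟨hc, hcE⟩
    exact ⟨c, hc', hsub hc', hbu, hcb⟩

theorem preferredIn_iff_of_conflictFree (hcf : ConflictFree R E) :
    PreferredIn A' R E ↔
      AdmissibleIn A' R E ∧ ∀ S, AdmissibleIn (untouched R E A') R S → S = ∅ := by
  refine and_congr_right fun hE => ⟨fun hmax S hS => ?_, fun hempty F hF hEF => ?_⟩
  · have hES := hmax _ (hE.union_untouched hcf hS) Finset.subset_union_left
    refine Finset.eq_empty_iff_forall_notMem.2 fun x hx => ?_
    exact (mem_untouched.1 (hS.1 hx)).2.1 (hES ▸ Finset.mem_union_right E hx)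
  · have hFE := hempty _ (hF.sdiff_untouched hEF)
    exact (Finset.sdiff_eq_empty_iff_subset.1 hFE).antisymm hEF

end

theorem stmt14_general (A : Finset α) (R : Finset (α × α))
    (E : Finset α)
    (hcf : ConflictFree (fun a b => (a, b) ∈ R) E)
    (Eplus Eminus I : Finset α)
    (hEp : Eplus = A.filter (fun b => ∃ a ∈ E, (a, b) ∈ R))
    (hEm : Eminus = A.filter (fun b => ∃ a ∈ E, (b, a) ∈ R))
    (hI : I = A \ (E ∪ Eplus ∪ Eminus))
    (A' : Finset α) (hA' : A' ⊆ A) :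
    PreferredIn A' (fun a b => (a, b) ∈ R) E ↔
      (E ⊆ A' ∧ A' ∩ (Eminus \ Eplus) = ∅ ∧
        (∀ a ∈ A' ∩ I, ((A.filter (fun b => (b, a) ∈ R)) ∩ (A' ∩ I)).Nonempty) ∧
        (∀ S : Finset α, AdmissibleIn (A' ∩ I) (fun a b => (a, b) ∈ R) S ↔ S = ∅)) := by
  have hA'I : A' ∩ I = untouched (fun a b => (a, b) ∈ R) E A' := by
    subst hEp hEm hI
    ext x
    by_cases hx : x ∈ A'
    · simp [hx, hA' hx, mem_untouched, not_or]
    · simp [hx, mem_untouched]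
  have hdefended : (∀ b ∈ A', (∃ a ∈ E, (b, a) ∈ R) → ∃ c ∈ E, (c, b) ∈ R) ↔
      A' ∩ (Eminus \ Eplus) = ∅ := by
    subst hEp hEm
    rw [Finset.eq_empty_iff_forall_notMem]
    refine forall_congr' fun b => ?_
    by_cases hb : b ∈ A'
    · simp [hb, hA' hb]
    · simp [hb]
  rw [preferredIn_iff_of_conflictFree hcf, admissibleIn_iff_of_conflictFree hcf, hdefended, hA'I,
    and_assoc]
  refine and_congr_right fun _ => and_congr_right fun _ => ⟨fun honly => ?_, fun h S => (h.2 S).1⟩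
  refine ⟨fun a ha => ?_, fun S => ⟨honly S, fun hS => hS ▸ admissibleIn_empty_s14⟩⟩
  obtain ⟨b, hb, hba⟩ := exists_attacker_of_admissibleIn_eq_empty honly ha
  exact ⟨b, Finset.mem_inter.2 ⟨Finset.mem_filter.2 ⟨hA' (untouched_subset hb), hba⟩, hb⟩⟩

theorem stmt14 (A : Finset α) (R : Finset (α × α)) (hRA : R ⊆ A ×ˢ A)
    (E : Finset α) (hEA : E ⊆ A)
    (hcf : ConflictFree (fun a b => (a, b) ∈ R) E)
    (Eplus Eminus I : Finset α)
    (hEp : Eplus = A.filter (fun b => ∃ a ∈ E, (a, b) ∈ R))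
    (hEm : Eminus = A.filter (fun b => ∃ a ∈ E, (b, a) ∈ R))
    (hI : I = A \ (E ∪ Eplus ∪ Eminus))
    (A' : Finset α) (hA' : A' ⊆ A) :
    PreferredIn A' (fun a b => (a, b) ∈ R) E ↔
      (E ⊆ A' ∧ A' ∩ (Eminus \ Eplus) = ∅ ∧
        (∀ a ∈ A' ∩ I, ((A.filter (fun b => (b, a) ∈ R)) ∩ (A' ∩ I)).Nonempty) ∧
        (∀ S : Finset α, AdmissibleIn (A' ∩ I) (fun a b => (a, b) ∈ R) S ↔ S = ∅)) :=
  stmt14_general A R E hcf Eplus Eminus I hEp hEm hI A' hA'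
end
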